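/- Let 0 < s < t and c > 0. Then the second moment of the Brownian meander transition density satisfies ∫₀^∞ x² · (φ_{t-s}(c - x) − φ_{t-s}(c + x)) · (x t^{3/2} / (c s^{3/2})) · exp(-x²/(2s)) · exp(c²/(2t)) dx = 3 s (t − s) / t + c² s² / t². -/

import Mathlib

/-!
Completing the square, `φ_{t-s}(c ∓ x) e^{-x²/2s} e^{c²/2t}` equals `(2π(t-s))^{-1/2} e^{-b(x ∓ m)²}`
with `b = t/(2s(t-s))` and `m = cs/t`. The two terms of the meander density are thus mirror
images of each other, so the integral over `(0, ∞)` of `x³` times their difference is the integral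
over `ℝ` of `x³ e^{-b(x-m)²}`: `√(π/b)` times the third moment `m³ + 3m · s(t-s)/t` of the normal
law with mean `m` and variance `s(t-s)/t`.
-/

open Real MeasureTheory Set

/-- Centered Gaussian density with variance `σ`. -/
noncomputable def phi (σ x : ℝ) : ℝ := (Real.sqrt (2 * π * σ))⁻¹ * Real.exp (-x ^ 2 / (2 * σ))

theorem integral_Ioi_add_comp_neg {E : Type*} [NormedAddCommGroup E] [NormedSpace ℝ E]
    {f : ℝ → E} (hf : Integrable f) :
    ∫ x in Ioi (0 : ℝ), (f x + f (-x)) = ∫ x, f x := by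
  rw [integral_add hf.integrableOn hf.comp_neg.integrableOn, integral_comp_neg_Ioi, neg_zero,
    add_comm, intervalIntegral.integral_Iic_add_Ioi hf.integrableOn hf.integrableOn]

theorem integrable_pow_mul_exp_neg_mul_sq {b : ℝ} (hb : 0 < b) (k : ℕ) :
    Integrable fun x : ℝ => x ^ k * exp (-b * x ^ 2) := by
  simpa [rpow_natCast] using
    integrable_rpow_mul_exp_neg_mul_sq hb (s := k) (neg_one_lt_zero.trans_le k.cast_nonneg)

theorem integrable_pow_mul_exp_neg_mul_sub_sq {b : ℝ} (hb : 0 < b) (m : ℝ) (k : ℕ) :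
    Integrable fun x : ℝ => x ^ k * exp (-b * (x - m) ^ 2) := by
  have hshift : Integrable fun y : ℝ => (y + m) ^ k * exp (-b * y ^ 2) := by
    simp_rw [add_pow, Finset.sum_mul]
    refine integrable_finsetSum _ fun i _ => ?_
    simpa only [mul_assoc, mul_comm, mul_left_comm] using
      (integrable_pow_mul_exp_neg_mul_sq hb i).const_mul (m ^ (k - i) * k.choose i)
  simpa only [sub_add_cancel] using hshift.comp_sub_right m

theorem integral_pow_mul_exp_neg_mul_sq_of_odd (b : ℝ) {k : ℕ} (hk : Odd k) :
    ∫ x : ℝ, x ^ k * exp (-b * x ^ 2) = 0 := by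
  have h := integral_neg_eq_self (fun x : ℝ => x ^ k * exp (-b * x ^ 2)) volume
  simp only [hk.neg_pow, neg_sq, neg_mul, integral_neg] at h ⊢
  linarith

theorem rpow_three_halves {x : ℝ} (hx : 0 ≤ x) : x ^ ((3 : ℝ) / 2) = x * sqrt x := by
  rw [show (3 : ℝ) / 2 = 1 + 1 / 2 by norm_num, rpow_add' hx (by norm_num), rpow_one,
    sqrt_eq_rpow]

theorem integral_sq_mul_exp_neg_mul_sq {b : ℝ} (hb : 0 < b) :
    ∫ x : ℝ, x ^ 2 * exp (-b * x ^ 2) = sqrt (π / b) / (2 * b) := by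
  have hhalf := integral_rpow_mul_exp_neg_mul_rpow two_pos (by norm_num : (-1 : ℝ) < 2) hb
  rw [show ((2 : ℝ) + 1) / 2 = 1 / 2 + 1 by norm_num, Gamma_add_one (by norm_num),
    Gamma_one_half_eq, show -((2 : ℝ) + 1) / 2 = -(3 / 2) by norm_num, rpow_neg hb.le,
    rpow_three_halves hb.le] at hhalf
  simp only [rpow_two] at hhalf
  have habs := integral_comp_abs (f := fun x : ℝ => x ^ 2 * exp (-b * x ^ 2))
  simp only [sq_abs] at habs
  rw [habs, hhalf, sqrt_div' _ hb.le]
  have := (sqrt_pos.2 hb).ne'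
  field_simp

theorem integral_pow_three_mul_exp_neg_mul_sub_sq {b : ℝ} (hb : 0 < b) (m : ℝ) :
    ∫ x : ℝ, x ^ 3 * exp (-b * (x - m) ^ 2) = sqrt (π / b) * (m ^ 3 + 3 * m / (2 * b)) := by
  have hI := integrable_pow_mul_exp_neg_mul_sq hb
  have hexpand : (fun y : ℝ => (y + m) ^ 3 * exp (-b * y ^ 2)) = fun y =>
      (y ^ 3 * exp (-b * y ^ 2) + 3 * m * (y ^ 2 * exp (-b * y ^ 2))) +
        (3 * m ^ 2 * (y ^ 1 * exp (-b * y ^ 2)) + m ^ 3 * (y ^ 0 * exp (-b * y ^ 2))) := by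
    funext y; ring
  calc ∫ x : ℝ, x ^ 3 * exp (-b * (x - m) ^ 2)
      = ∫ y : ℝ, (y + m) ^ 3 * exp (-b * y ^ 2) := by
        rw [← integral_sub_right_eq_self (fun y : ℝ => (y + m) ^ 3 * exp (-b * y ^ 2)) m]
        simp only [sub_add_cancel]
    _ = sqrt (π / b) * (m ^ 3 + 3 * m / (2 * b)) := by
      rw [hexpand, integral_add ((hI 3).fun_add ((hI 2).const_mul _))
          (((hI 1).const_mul _).fun_add ((hI 0).const_mul _)),
        integral_add (hI 3) ((hI 2).const_mul _),
        integral_add ((hI 1).const_mul _) ((hI 0).const_mul _),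
        integral_const_mul, integral_const_mul, integral_const_mul,
        integral_pow_mul_exp_neg_mul_sq_of_odd b (by decide : Odd 3),
        integral_pow_mul_exp_neg_mul_sq_of_odd b odd_one, integral_sq_mul_exp_neg_mul_sq hb]
      simp only [pow_zero, one_mul, integral_gaussian]
      ring

theorem phi_mul_exp_mul_exp {s t : ℝ} (hs : s ≠ 0) (ht : t ≠ 0) (hst : s ≠ t) (c x : ℝ) :
    phi (t - s) (c - x) * exp (-x ^ 2 / (2 * s)) * exp (c ^ 2 / (2 * t)) =
      (sqrt (2 * π * (t - s)))⁻¹ * exp (-(t / (2 * s * (t - s))) * (x - c * s / t) ^ 2) := by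
  have hts : t - s ≠ 0 := sub_ne_zero.2 hst.symm
  rw [phi, mul_assoc, mul_assoc, ← exp_add, ← exp_add]
  congr 2
  field_simp
  ring

theorem meander_integrand_eq {s t : ℝ} (hs : s ≠ 0) (ht : t ≠ 0) (hst : s ≠ t) (c x : ℝ) :
    x ^ 2 * ((phi (t - s) (c - x) - phi (t - s) (c + x)) *
        (x * t ^ ((3 : ℝ) / 2) / (c * s ^ ((3 : ℝ) / 2))) *
        exp (-x ^ 2 / (2 * s)) * exp (c ^ 2 / (2 * t))) =
      t ^ ((3 : ℝ) / 2) / (c * s ^ ((3 : ℝ) / 2)) * (sqrt (2 * π * (t - s)))⁻¹ *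
        (x ^ 3 * exp (-(t / (2 * s * (t - s))) * (x - c * s / t) ^ 2) +
          (-x) ^ 3 * exp (-(t / (2 * s * (t - s))) * (-x - c * s / t) ^ 2)) := by
  have h₁ := phi_mul_exp_mul_exp hs ht hst c x
  have h₂ := phi_mul_exp_mul_exp hs ht hst c (-x)
  rw [sub_neg_eq_add, neg_sq] at h₂
  linear_combination (x ^ 3 * (t ^ ((3 : ℝ) / 2) / (c * s ^ ((3 : ℝ) / 2)))) * (h₁ - h₂)

theorem meander_normalizer {s t : ℝ} (hs : 0 < s) (hst : s < t) (c : ℝ) :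
    t ^ ((3 : ℝ) / 2) / (c * s ^ ((3 : ℝ) / 2)) * (sqrt (2 * π * (t - s)))⁻¹ *
      sqrt (π / (t / (2 * s * (t - s)))) = t / (c * s) := by
  have ht : 0 < t := hs.trans hst
  have hu : 0 < t - s := sub_pos.2 hst
  have hsplit : π / (t / (2 * s * (t - s))) = 2 * π * (t - s) * (s / t) := by field_simp
  rw [hsplit, sqrt_mul (x := 2 * π * (t - s)) (by positivity), sqrt_div' _ ht.le, rpow_three_halves ht.le,
    rpow_three_halves hs.le]
  have : sqrt (2 * π * (t - s)) ≠ 0 := by positivity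
  have := (sqrt_pos.2 hs).ne'
  have := (sqrt_pos.2 ht).ne'
  field_simp

theorem stmt9 (s t c : ℝ) (hs : 0 < s) (hst : s < t) (hc : 0 < c) :
    ∫ x in Ioi (0 : ℝ),
        x ^ 2 * ((phi (t - s) (c - x) - phi (t - s) (c + x)) *
          (x * t ^ ((3 : ℝ) / 2) / (c * s ^ ((3 : ℝ) / 2))) *
          Real.exp (-x ^ 2 / (2 * s)) * Real.exp (c ^ 2 / (2 * t))) =
      3 * s * (t - s) / t + c ^ 2 * s ^ 2 / t ^ 2 := by
  have ht : 0 < t := hs.trans hst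
  have hu : 0 < t - s := sub_pos.2 hst
  set b := t / (2 * s * (t - s)) with hb_def
  set m := c * s / t with hm_def
  set K := t ^ ((3 : ℝ) / 2) / (c * s ^ ((3 : ℝ) / 2)) * (sqrt (2 * π * (t - s)))⁻¹ with hK
  have hb : 0 < b := by positivity
  let g : ℝ → ℝ := fun x => x ^ 3 * exp (-b * (x - m) ^ 2)
  calc _ = ∫ x in Ioi (0 : ℝ), K * (g x + g (-x)) :=
        setIntegral_congr_fun measurableSet_Ioi fun x _ =>
          meander_integrand_eq hs.ne' ht.ne' hst.ne c x
    _ = K * ∫ x, g x := by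
        rw [integral_const_mul, integral_Ioi_add_comp_neg
          (integrable_pow_mul_exp_neg_mul_sub_sq hb m 3)]
    _ = K * sqrt (π / b) * (m ^ 3 + 3 * m / (2 * b)) := by
        rw [integral_pow_three_mul_exp_neg_mul_sub_sq hb m]
        ring
    _ = 3 * s * (t - s) / t + c ^ 2 * s ^ 2 / t ^ 2 := by
        rw [hK, meander_normalizer hs hst c, hb_def, hm_def]
        field_simp
        ring
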